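/- arXiv:2303.07411 — 2 statements merged into one kernel-verified Lean document; each statement's English description precedes it below -/
import Mathlib

section
/- Let u, v : ℝ⁴ → ℝ be a smooth solution of RMHD, and let ψ₁, ψ₂, φ₁, φ₂ : ℝ⁴ → ℝ be smooth functions satisfying the Bäcklund system: ψ₁,t = J(u, ψ₁) + φ₁, ψ₁,z = J(v, ψ₁) + φ₂, ψ₂,t = J(u, ψ₂) + J(Δv, ψ₁) + Δφ₂, and ψ₂,z = J(v, ψ₂) + J(Δu, ψ₁) + Δφ₁ at every point. Then (φ₁, φ₂) satisfies the linearized (tangent) system of RMHD: (Δφ₁)_t − (Δφ₂)_z − J(φ₁, Δu) − J(u, Δφ₁) + J(φ₂, Δv) + J(v, Δφ₂) = 0 and φ₂,t − φ₁,z − J(φ₁, v) − J(u, φ₂) = 0 at every point. Hence the Bäcklund system relates the tangent and the cotangent coverings of RMHD. -/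
noncomputable section

/-- Partial derivative in `t` of a function of `(t, x, y, z)`. -/
def pt (f : ℝ × ℝ × ℝ × ℝ → ℝ) (P : ℝ × ℝ × ℝ × ℝ) : ℝ :=
  deriv (fun w => f (w, P.2.1, P.2.2.1, P.2.2.2)) P.1

/-- Partial derivative in `x` of a function of `(t, x, y, z)`. -/
def px (f : ℝ × ℝ × ℝ × ℝ → ℝ) (P : ℝ × ℝ × ℝ × ℝ) : ℝ :=
  deriv (fun w => f (P.1, w, P.2.2.1, P.2.2.2)) P.2.1

/-- Partial derivative in `y` of a function of `(t, x, y, z)`. -/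
def py (f : ℝ × ℝ × ℝ × ℝ → ℝ) (P : ℝ × ℝ × ℝ × ℝ) : ℝ :=
  deriv (fun w => f (P.1, P.2.1, w, P.2.2.2)) P.2.2.1

/-- Partial derivative in `z` of a function of `(t, x, y, z)`. -/
def pz (f : ℝ × ℝ × ℝ × ℝ → ℝ) (P : ℝ × ℝ × ℝ × ℝ) : ℝ :=
  deriv (fun w => f (P.1, P.2.1, P.2.2.1, w)) P.2.2.2

/-- Jacobi bracket `J(f, g) = f_x g_y - f_y g_x`. -/
def J (f g : ℝ × ℝ × ℝ × ℝ → ℝ) : ℝ × ℝ × ℝ × ℝ → ℝ :=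
  fun P => px f P * py g P - py f P * px g P

/-- Planar Laplacian `Δf = f_xx + f_yy`. -/
def lap (f : ℝ × ℝ × ℝ × ℝ → ℝ) : ℝ × ℝ × ℝ × ℝ → ℝ :=
  fun P => px (px f) P + py (py f) P

/-- The operator `E(f) = x f_x + y f_y - 2 f`. -/
def Eop (f : ℝ × ℝ × ℝ × ℝ → ℝ) : ℝ × ℝ × ℝ × ℝ → ℝ :=
  fun P => P.2.1 * px f P + P.2.2.1 * py f P - 2 * f P

/-- `F1 = (Δu)_t - (Δv)_z - J(u, Δu) + J(v, Δv)`. -/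
def F1 (u v : ℝ × ℝ × ℝ × ℝ → ℝ) : ℝ × ℝ × ℝ × ℝ → ℝ :=
  fun P => pt (lap u) P - pz (lap v) P - J u (lap u) P + J v (lap v) P

/-- `F2 = v_t - u_z - J(u, v)`. -/
def F2 (u v : ℝ × ℝ × ℝ × ℝ → ℝ) : ℝ × ℝ × ℝ × ℝ → ℝ :=
  fun P => pt v P - pz u P - J u v P

/- ### Auxiliary toolkit -/

abbrev V4 := ℝ × ℝ × ℝ × ℝ

def D (d : V4) (f : V4 → ℝ) : V4 → ℝ := fun P => fderiv ℝ f P d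

def et : V4 := (1,0,0,0)
def ex : V4 := (0,1,0,0)
def ey : V4 := (0,0,1,0)
def ez : V4 := (0,0,0,1)

lemma D_contDiff {f : V4 → ℝ} (hf : ContDiff ℝ (⊤ : ℕ∞) f) (d : V4) : ContDiff ℝ (⊤ : ℕ∞) (D d f) :=
  (hf.fderiv_right (le_refl _)).clm_apply contDiff_const

lemma D_comm {f : V4 → ℝ} (hf : ContDiff ℝ (⊤ : ℕ∞) f) (d1 d2 : V4) (P : V4) :
    D d1 (D d2 f) P = D d2 (D d1 f) P := by
  have hf1 : ∀ y, HasFDerivAt f (fderiv ℝ f y) y := fun y =>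
    (hf.differentiable (by simp) y).hasFDerivAt
  have hf2 : Differentiable ℝ (fderiv ℝ f) :=
    (hf.fderiv_right (m := (⊤ : ℕ∞)) (le_refl _)).differentiable (by simp)
  have key : ∀ (a b : V4), D a (D b f) P = fderiv ℝ (fderiv ℝ f) P a b := by
    intro a b
    have : fderiv ℝ (fun x => fderiv ℝ f x b) P =
        (fderiv ℝ (fderiv ℝ f) P).flip b := by
      have h := fderiv_clm_apply (hf2 P) (differentiableAt_const b)
      simp at h
      simpa using h
    have hDb : D b f = fun x => fderiv ℝ f x b := rfl
    show fderiv ℝ (D b f) P a = _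
    rw [hDb, this]
    rfl
  rw [key, key]
  exact (second_derivative_symmetric hf1 (hf2 P).hasFDerivAt d2 d1).symm

lemma D_addf {f g : V4 → ℝ} (hf : ContDiff ℝ (⊤ : ℕ∞) f) (hg : ContDiff ℝ (⊤ : ℕ∞) g) (d : V4) :
    D d (fun x => f x + g x) = fun x => D d f x + D d g x := by
  funext P
  simp only [D]
  rw [fderiv_fun_add (hf.differentiable (by simp) P) (hg.differentiable (by simp) P)]
  rfl

lemma D_subf {f g : V4 → ℝ} (hf : ContDiff ℝ (⊤ : ℕ∞) f) (hg : ContDiff ℝ (⊤ : ℕ∞) g) (d : V4) :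
    D d (fun x => f x - g x) = fun x => D d f x - D d g x := by
  funext P
  simp only [D]
  rw [fderiv_fun_sub (hf.differentiable (by simp) P) (hg.differentiable (by simp) P)]
  rfl

lemma D_mulf {f g : V4 → ℝ} (hf : ContDiff ℝ (⊤ : ℕ∞) f) (hg : ContDiff ℝ (⊤ : ℕ∞) g) (d : V4) :
    D d (fun x => f x * g x) = fun x => D d f x * g x + f x * D d g x := by
  funext P
  simp only [D]
  rw [fderiv_fun_mul (hf.differentiable (by simp) P) (hg.differentiable (by simp) P)]
  simp
  ring

lemma D_zerof (d : V4) : D d (fun _ => (0:ℝ)) = fun _ => (0:ℝ) := by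
  funext P; simp [D]

lemma pt_eqD {f : V4 → ℝ} (hf : ContDiff ℝ (⊤ : ℕ∞) f) : pt f = D et f := by
  funext P
  have hι : HasDerivAt (fun w : ℝ => ((w, P.2.1, P.2.2.1, P.2.2.2) : V4)) et P.1 :=
    (hasDerivAt_id _).prodMk (((hasDerivAt_const _ _).prodMk
      ((hasDerivAt_const _ _).prodMk (hasDerivAt_const _ _))))
  exact ((hf.differentiable (by simp) P).hasFDerivAt.comp_hasDerivAt P.1 hι).deriv

lemma px_eqD {f : V4 → ℝ} (hf : ContDiff ℝ (⊤ : ℕ∞) f) : px f = D ex f := by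
  funext P
  have hι : HasDerivAt (fun w : ℝ => ((P.1, w, P.2.2.1, P.2.2.2) : V4)) ex P.2.1 :=
    (hasDerivAt_const _ _).prodMk (((hasDerivAt_id _).prodMk
      ((hasDerivAt_const _ _).prodMk (hasDerivAt_const _ _))))
  exact ((hf.differentiable (by simp) P).hasFDerivAt.comp_hasDerivAt P.2.1 hι).deriv

lemma py_eqD {f : V4 → ℝ} (hf : ContDiff ℝ (⊤ : ℕ∞) f) : py f = D ey f := by
  funext P
  have hι : HasDerivAt (fun w : ℝ => ((P.1, P.2.1, w, P.2.2.2) : V4)) ey P.2.2.1 :=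
    (hasDerivAt_const _ _).prodMk (((hasDerivAt_const _ _).prodMk
      ((hasDerivAt_id _).prodMk (hasDerivAt_const _ _))))
  exact ((hf.differentiable (by simp) P).hasFDerivAt.comp_hasDerivAt P.2.2.1 hι).deriv

lemma pz_eqD {f : V4 → ℝ} (hf : ContDiff ℝ (⊤ : ℕ∞) f) : pz f = D ez f := by
  funext P
  have hι : HasDerivAt (fun w : ℝ => ((P.1, P.2.1, P.2.2.1, w) : V4)) ez P.2.2.2 :=
    (hasDerivAt_const _ _).prodMk (((hasDerivAt_const _ _).prodMk
      ((hasDerivAt_const _ _).prodMk (hasDerivAt_id _))))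
  exact ((hf.differentiable (by simp) P).hasFDerivAt.comp_hasDerivAt P.2.2.2 hι).deriv

/-- smooth functions as a subalgebra -/
def SA : Subalgebra ℝ (V4 → ℝ) where
  carrier := {f | ContDiff ℝ (⊤ : ℕ∞) f}
  mul_mem' := fun hf hg => by simp only [Set.mem_setOf_eq] at *; exact hf.mul hg
  one_mem' := by simp only [Set.mem_setOf_eq]; exact contDiff_const
  add_mem' := fun hf hg => by simp only [Set.mem_setOf_eq] at *; exact hf.add hg
  zero_mem' := by simp only [Set.mem_setOf_eq]; exact contDiff_const
  algebraMap_mem' := fun _ => by simp only [Set.mem_setOf_eq]; exact contDiff_const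

def Dd (d : V4) (a : SA) : SA := ⟨D d a.1, D_contDiff a.2 d⟩

lemma Dd_add (d : V4) (a b : SA) : Dd d (a + b) = Dd d a + Dd d b := by
  apply Subtype.ext
  have h1 : ((a + b : SA) : V4 → ℝ) = fun x => a.1 x + b.1 x := rfl
  show D d ((a + b : SA) : V4 → ℝ) = _
  rw [h1, D_addf a.2 b.2]
  rfl

lemma Dd_sub (d : V4) (a b : SA) : Dd d (a - b) = Dd d a - Dd d b := by
  apply Subtype.ext
  have h1 : ((a - b : SA) : V4 → ℝ) = fun x => a.1 x - b.1 x := rfl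
  show D d ((a - b : SA) : V4 → ℝ) = _
  rw [h1, D_subf a.2 b.2]
  rfl

lemma Dd_mul (d : V4) (a b : SA) : Dd d (a * b) = Dd d a * b + a * Dd d b := by
  apply Subtype.ext
  have h1 : ((a * b : SA) : V4 → ℝ) = fun x => a.1 x * b.1 x := rfl
  show D d ((a * b : SA) : V4 → ℝ) = _
  rw [h1, D_mulf a.2 b.2]
  rfl

lemma Dd_zero (d : V4) : Dd d (0 : SA) = 0 := by
  apply Subtype.ext
  have h1 : ((0 : SA) : V4 → ℝ) = fun _ => (0:ℝ) := rfl
  show D d ((0 : SA) : V4 → ℝ) = _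
  rw [h1, D_zerof]

lemma Dd_swap (d1 d2 : V4) (a : SA) : Dd d1 (Dd d2 a) = Dd d2 (Dd d1 a) :=
  Subtype.ext (funext fun P => D_comm a.2 d1 d2 P)

lemma swap_tx (a : SA) : Dd et (Dd ex a) = Dd ex (Dd et a) := Dd_swap _ _ _
lemma swap_ty (a : SA) : Dd et (Dd ey a) = Dd ey (Dd et a) := Dd_swap _ _ _
lemma swap_zx (a : SA) : Dd ez (Dd ex a) = Dd ex (Dd ez a) := Dd_swap _ _ _
lemma swap_zy (a : SA) : Dd ez (Dd ey a) = Dd ey (Dd ez a) := Dd_swap _ _ _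
lemma swap_zt (a : SA) : Dd ez (Dd et a) = Dd et (Dd ez a) := Dd_swap _ _ _
lemma swap_yx (a : SA) : Dd ey (Dd ex a) = Dd ex (Dd ey a) := Dd_swap _ _ _

def Jd (a b : SA) : SA := Dd ex a * Dd ey b - Dd ey a * Dd ex b
def lapd (a : SA) : SA := Dd ex (Dd ex a) + Dd ey (Dd ey a)

set_option maxHeartbeats 4000000 in
/-- abstract main lemma in the algebra of smooth functions -/
theorem main_SA (U V Ψ₁ Ψ₂ Φ₁ Φ₂ : SA)
    (HF1 : Dd et (lapd U) - Dd ez (lapd V) - Jd U (lapd U) + Jd V (lapd V) = 0)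
    (HF2 : Dd et V - Dd ez U - Jd U V = 0)
    (HB1 : Dd et Ψ₁ = Jd U Ψ₁ + Φ₁)
    (HB2 : Dd ez Ψ₁ = Jd V Ψ₁ + Φ₂)
    (HB3 : Dd et Ψ₂ = Jd U Ψ₂ + Jd (lapd V) Ψ₁ + lapd Φ₂)
    (HB4 : Dd ez Ψ₂ = Jd V Ψ₂ + Jd (lapd U) Ψ₁ + lapd Φ₁) :
    (Dd et (lapd Φ₁) - Dd ez (lapd Φ₂) - Jd Φ₁ (lapd U) - Jd U (lapd Φ₁)
      + Jd Φ₂ (lapd V) + Jd V (lapd Φ₂) = 0) ∧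
    (Dd et Φ₂ - Dd ez Φ₁ - Jd Φ₁ V - Jd U Φ₂ = 0) := by
  have key2 : Dd ez (Jd U Ψ₁ + Φ₁) = Dd et (Jd V Ψ₁ + Φ₂) := by
    rw [← HB1, ← HB2, Dd_swap]
  have key1 : Dd ez (Jd U Ψ₂ + Jd (lapd V) Ψ₁ + lapd Φ₂)
      = Dd et (Jd V Ψ₂ + Jd (lapd U) Ψ₁ + lapd Φ₁) := by
    rw [← HB3, ← HB4, Dd_swap]
  have HF2x : Dd ex (Dd et V - Dd ez U - Jd U V) = 0 := by rw [HF2, Dd_zero]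
  have HF2y : Dd ey (Dd et V - Dd ez U - Jd U V) = 0 := by rw [HF2, Dd_zero]
  have HF1x : Dd ex (Dd et (lapd U) - Dd ez (lapd V) - Jd U (lapd U) + Jd V (lapd V)) = 0 := by
    rw [HF1, Dd_zero]
  have HF1y : Dd ey (Dd et (lapd U) - Dd ez (lapd V) - Jd U (lapd U) + Jd V (lapd V)) = 0 := by
    rw [HF1, Dd_zero]
  simp only [Jd, lapd, Dd_add, Dd_sub, Dd_mul, HB1, HB2, HB3, HB4,
    swap_tx, swap_ty, swap_zx, swap_zy, swap_zt, swap_yx] at key1 key2 HF1x HF1y HF2x HF2y ⊢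
  constructor
  · linear_combination (norm := ring1) (-1 : SA) * key1 - Dd ey Ψ₂ * HF2x + Dd ex Ψ₂ * HF2y
      - Dd ey Ψ₁ * HF1x + Dd ex Ψ₁ * HF1y
  · linear_combination (norm := ring1) (-1 : SA) * key2 - Dd ey Ψ₁ * HF2x + Dd ex Ψ₁ * HF2y

lemma SAsm (a : SA) : ContDiff ℝ (⊤ : ℕ∞) a.1 := a.2

lemma J_SA (a b : SA) : J a.1 b.1 = (Jd a b : SA).1 := by
  funext P
  show px a.1 P * py b.1 P - py a.1 P * px b.1 P = _
  rw [px_eqD (SAsm a), py_eqD (SAsm b), py_eqD (SAsm a), px_eqD (SAsm b)]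
  rfl

lemma lap_SA (a : SA) : lap a.1 = (lapd a : SA).1 := by
  funext P
  show px (px a.1) P + py (py a.1) P = _
  rw [px_eqD (SAsm a), py_eqD (SAsm a), px_eqD (D_contDiff (SAsm a) ex),
    py_eqD (D_contDiff (SAsm a) ey)]
  rfl

lemma pt_SA (a : SA) : pt a.1 = (Dd et a : SA).1 := pt_eqD (SAsm a)
lemma pz_SA (a : SA) : pz a.1 = (Dd ez a : SA).1 := pz_eqD (SAsm a)

set_option maxHeartbeats 4000000 in
theorem backlund_gives_tangent
    (u v psi1 psi2 f1 f2 : ℝ × ℝ × ℝ × ℝ → ℝ)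
    (hu : ContDiff ℝ (⊤ : ℕ∞) u) (hv : ContDiff ℝ (⊤ : ℕ∞) v)
    (hpsi1 : ContDiff ℝ (⊤ : ℕ∞) psi1) (hpsi2 : ContDiff ℝ (⊤ : ℕ∞) psi2)
    (hf1s : ContDiff ℝ (⊤ : ℕ∞) f1) (hf2s : ContDiff ℝ (⊤ : ℕ∞) f2)
    (hF1 : ∀ P, F1 u v P = 0) (hF2 : ∀ P, F2 u v P = 0)
    (hb1 : ∀ P, pt psi1 P = J u psi1 P + f1 P)
    (hb2 : ∀ P, pz psi1 P = J v psi1 P + f2 P)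
    (hb3 : ∀ P, pt psi2 P = J u psi2 P + J (lap v) psi1 P + lap f2 P)
    (hb4 : ∀ P, pz psi2 P = J v psi2 P + J (lap u) psi1 P + lap f1 P) :
    (∀ P, pt (lap f1) P - pz (lap f2) P - J f1 (lap u) P - J u (lap f1) P
      + J f2 (lap v) P + J v (lap f2) P = 0) ∧
    (∀ P, pt f2 P - pz f1 P - J f1 v P - J u f2 P = 0) := by
  have elapu : lap u = (lapd (⟨u, hu⟩ : SA)).1 := lap_SA ⟨u, hu⟩
  have elapv : lap v = (lapd (⟨v, hv⟩ : SA)).1 := lap_SA ⟨v, hv⟩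
  have elapf1 : lap f1 = (lapd (⟨f1, hf1s⟩ : SA)).1 := lap_SA ⟨f1, hf1s⟩
  have elapf2 : lap f2 = (lapd (⟨f2, hf2s⟩ : SA)).1 := lap_SA ⟨f2, hf2s⟩
  have HB1' : Dd et (⟨psi1, hpsi1⟩ : SA) = Jd ⟨u, hu⟩ ⟨psi1, hpsi1⟩ + ⟨f1, hf1s⟩ := by
    apply Subtype.ext; funext P
    have h := hb1 P
    have e1 : pt psi1 = (Dd et (⟨psi1, hpsi1⟩ : SA)).1 := pt_SA ⟨psi1, hpsi1⟩
    have e2 : J u psi1 = (Jd (⟨u, hu⟩ : SA) ⟨psi1, hpsi1⟩).1 := J_SA ⟨u, hu⟩ ⟨psi1, hpsi1⟩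
    rw [e1, e2] at h
    exact h
  have HB2' : Dd ez (⟨psi1, hpsi1⟩ : SA) = Jd ⟨v, hv⟩ ⟨psi1, hpsi1⟩ + ⟨f2, hf2s⟩ := by
    apply Subtype.ext; funext P
    have h := hb2 P
    have e1 : pz psi1 = (Dd ez (⟨psi1, hpsi1⟩ : SA)).1 := pz_SA ⟨psi1, hpsi1⟩
    have e2 : J v psi1 = (Jd (⟨v, hv⟩ : SA) ⟨psi1, hpsi1⟩).1 := J_SA ⟨v, hv⟩ ⟨psi1, hpsi1⟩
    rw [e1, e2] at h
    exact h
  have HB3' : Dd et (⟨psi2, hpsi2⟩ : SA) = Jd ⟨u, hu⟩ ⟨psi2, hpsi2⟩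
      + Jd (lapd ⟨v, hv⟩) ⟨psi1, hpsi1⟩ + lapd ⟨f2, hf2s⟩ := by
    apply Subtype.ext; funext P
    have h := hb3 P
    rw [elapv, elapf2] at h
    have e1 : pt psi2 = (Dd et (⟨psi2, hpsi2⟩ : SA)).1 := pt_SA ⟨psi2, hpsi2⟩
    have e2 : J u psi2 = (Jd (⟨u, hu⟩ : SA) ⟨psi2, hpsi2⟩).1 := J_SA ⟨u, hu⟩ ⟨psi2, hpsi2⟩
    have e3 : J ((lapd (⟨v, hv⟩ : SA)).1) psi1
        = (Jd (lapd ⟨v, hv⟩) ⟨psi1, hpsi1⟩).1 := J_SA (lapd ⟨v, hv⟩) ⟨psi1, hpsi1⟩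
    rw [e1, e2, e3] at h
    exact h
  have HB4' : Dd ez (⟨psi2, hpsi2⟩ : SA) = Jd ⟨v, hv⟩ ⟨psi2, hpsi2⟩
      + Jd (lapd ⟨u, hu⟩) ⟨psi1, hpsi1⟩ + lapd ⟨f1, hf1s⟩ := by
    apply Subtype.ext; funext P
    have h := hb4 P
    rw [elapu, elapf1] at h
    have e1 : pz psi2 = (Dd ez (⟨psi2, hpsi2⟩ : SA)).1 := pz_SA ⟨psi2, hpsi2⟩
    have e2 : J v psi2 = (Jd (⟨v, hv⟩ : SA) ⟨psi2, hpsi2⟩).1 := J_SA ⟨v, hv⟩ ⟨psi2, hpsi2⟩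
    have e3 : J ((lapd (⟨u, hu⟩ : SA)).1) psi1
        = (Jd (lapd ⟨u, hu⟩) ⟨psi1, hpsi1⟩).1 := J_SA (lapd ⟨u, hu⟩) ⟨psi1, hpsi1⟩
    rw [e1, e2, e3] at h
    exact h
  have HF2' : Dd et (⟨v, hv⟩ : SA) - Dd ez ⟨u, hu⟩ - Jd ⟨u, hu⟩ ⟨v, hv⟩ = 0 := by
    apply Subtype.ext; funext P
    have h := hF2 P
    simp only [F2] at h
    have e1 : pt v = (Dd et (⟨v, hv⟩ : SA)).1 := pt_SA ⟨v, hv⟩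
    have e2 : pz u = (Dd ez (⟨u, hu⟩ : SA)).1 := pz_SA ⟨u, hu⟩
    have e3 : J u v = (Jd (⟨u, hu⟩ : SA) ⟨v, hv⟩).1 := J_SA ⟨u, hu⟩ ⟨v, hv⟩
    rw [e1, e2, e3] at h
    exact h
  have HF1' : Dd et (lapd (⟨u, hu⟩ : SA)) - Dd ez (lapd ⟨v, hv⟩)
      - Jd ⟨u, hu⟩ (lapd ⟨u, hu⟩) + Jd ⟨v, hv⟩ (lapd ⟨v, hv⟩) = 0 := by
    apply Subtype.ext; funext P
    have h := hF1 P
    simp only [F1] at h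
    rw [elapu, elapv] at h
    have e1 : pt ((lapd (⟨u, hu⟩ : SA)).1) = (Dd et (lapd ⟨u, hu⟩)).1 := pt_SA (lapd ⟨u, hu⟩)
    have e2 : pz ((lapd (⟨v, hv⟩ : SA)).1) = (Dd ez (lapd ⟨v, hv⟩)).1 := pz_SA (lapd ⟨v, hv⟩)
    have e3 : J u ((lapd (⟨u, hu⟩ : SA)).1)
        = (Jd (⟨u, hu⟩ : SA) (lapd ⟨u, hu⟩)).1 := J_SA ⟨u, hu⟩ (lapd ⟨u, hu⟩)
    have e4 : J v ((lapd (⟨v, hv⟩ : SA)).1)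
        = (Jd (⟨v, hv⟩ : SA) (lapd ⟨v, hv⟩)).1 := J_SA ⟨v, hv⟩ (lapd ⟨v, hv⟩)
    rw [e1, e2, e3, e4] at h
    exact h
  obtain ⟨G1, G2⟩ := main_SA ⟨u, hu⟩ ⟨v, hv⟩ ⟨psi1, hpsi1⟩ ⟨psi2, hpsi2⟩ ⟨f1, hf1s⟩ ⟨f2, hf2s⟩
    HF1' HF2' HB1' HB2' HB3' HB4'
  constructor
  · intro P
    rw [elapf1, elapf2, elapu, elapv]
    have e1 : pt ((lapd (⟨f1, hf1s⟩ : SA)).1) = (Dd et (lapd ⟨f1, hf1s⟩)).1 :=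
      pt_SA (lapd ⟨f1, hf1s⟩)
    have e2 : pz ((lapd (⟨f2, hf2s⟩ : SA)).1) = (Dd ez (lapd ⟨f2, hf2s⟩)).1 :=
      pz_SA (lapd ⟨f2, hf2s⟩)
    have e3 : J f1 ((lapd (⟨u, hu⟩ : SA)).1)
        = (Jd (⟨f1, hf1s⟩ : SA) (lapd ⟨u, hu⟩)).1 := J_SA ⟨f1, hf1s⟩ (lapd ⟨u, hu⟩)
    have e4 : J u ((lapd (⟨f1, hf1s⟩ : SA)).1)
        = (Jd (⟨u, hu⟩ : SA) (lapd ⟨f1, hf1s⟩)).1 := J_SA ⟨u, hu⟩ (lapd ⟨f1, hf1s⟩)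
    have e5 : J f2 ((lapd (⟨v, hv⟩ : SA)).1)
        = (Jd (⟨f2, hf2s⟩ : SA) (lapd ⟨v, hv⟩)).1 := J_SA ⟨f2, hf2s⟩ (lapd ⟨v, hv⟩)
    have e6 : J v ((lapd (⟨f2, hf2s⟩ : SA)).1)
        = (Jd (⟨v, hv⟩ : SA) (lapd ⟨f2, hf2s⟩)).1 := J_SA ⟨v, hv⟩ (lapd ⟨f2, hf2s⟩)
    rw [e1, e2, e3, e4, e5, e6]
    exact congrFun (congrArg Subtype.val G1) P
  · intro P
    have e1 : pt f2 = (Dd et (⟨f2, hf2s⟩ : SA)).1 := pt_SA ⟨f2, hf2s⟩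
    have e2 : pz f1 = (Dd ez (⟨f1, hf1s⟩ : SA)).1 := pz_SA ⟨f1, hf1s⟩
    have e3 : J f1 v = (Jd (⟨f1, hf1s⟩ : SA) ⟨v, hv⟩).1 := J_SA ⟨f1, hf1s⟩ ⟨v, hv⟩
    have e4 : J u f2 = (Jd (⟨u, hu⟩ : SA) ⟨f2, hf2s⟩).1 := J_SA ⟨u, hu⟩ ⟨f2, hf2s⟩
    rw [e1, e2, e3, e4]
    exact congrFun (congrArg Subtype.val G2) P
end
end

section
/- Let u, v : ℝ⁴ → ℝ be a smooth solution of RMHD and let A : ℝ² → ℝ be a smooth function of (t, z) with A_tt = A_zz. Then the pair φ₁ := −A_z·u_t − A_t·u_z − A_tz·u − A_tt·v, φ₂ := −A_z·v_t − A_t·v_z − A_tt·u − A_tz·v satisfies the linearized (tangent) system of RMHD: (Δφ₁)_t − (Δφ₂)_z − J(φ₁, Δu) − J(u, Δφ₁) + J(φ₂, Δv) + J(v, Δφ₂) = 0 and φ₂,t − φ₁,z − J(φ₁, v) − J(u, φ₂) = 0 at every point. That is, Φ₁(A) is a symmetry of RMHD. -/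
noncomputable section

/-- Partial derivative in `t` of a function of `(t, z)`. -/
def dt2 (f : ℝ × ℝ → ℝ) (Q : ℝ × ℝ) : ℝ := deriv (fun w => f (w, Q.2)) Q.1

/-- Partial derivative in `z` of a function of `(t, z)`. -/
def dz2 (f : ℝ × ℝ → ℝ) (Q : ℝ × ℝ) : ℝ := deriv (fun w => f (Q.1, w)) Q.2

/-! ### Auxiliary directional-derivative calculus -/

/-- Directional derivative (via `fderiv`) in direction `w`. -/
def pd (w : ℝ × ℝ × ℝ × ℝ) (f : ℝ × ℝ × ℝ × ℝ → ℝ) : ℝ × ℝ × ℝ × ℝ → ℝ :=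
  fun P => fderiv ℝ f P w

def e0 : ℝ × ℝ × ℝ × ℝ := (1,0,0,0)
def e1 : ℝ × ℝ × ℝ × ℝ := (0,1,0,0)
def e2 : ℝ × ℝ × ℝ × ℝ := (0,0,1,0)
def e3 : ℝ × ℝ × ℝ × ℝ := (0,0,0,1)

@[fun_prop]
lemma pd_smooth (w : ℝ × ℝ × ℝ × ℝ) {f} (hf : ContDiff ℝ (⊤ : ℕ∞) f) : ContDiff ℝ (⊤ : ℕ∞) (pd w f) := by
  unfold pd
  exact (hf.fderiv_right (by simp)).clm_apply contDiff_const

lemma pt_pd {f} (hf : ContDiff ℝ (⊤ : ℕ∞) f) : pt f = pd e0 f := by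
  funext P
  have hc : HasDerivAt (fun w : ℝ => ((w, P.2.1, P.2.2.1, P.2.2.2) : ℝ×ℝ×ℝ×ℝ)) e0 P.1 :=
    (hasDerivAt_id P.1).prodMk (hasDerivAt_const _ _)
  exact ((hf.differentiable (by simp) P).hasFDerivAt.comp_hasDerivAt P.1 hc).deriv

lemma px_pd {f} (hf : ContDiff ℝ (⊤ : ℕ∞) f) : px f = pd e1 f := by
  funext P
  have hc : HasDerivAt (fun w : ℝ => ((P.1, w, P.2.2.1, P.2.2.2) : ℝ×ℝ×ℝ×ℝ)) e1 P.2.1 :=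
    (hasDerivAt_const _ _).prodMk ((hasDerivAt_id _).prodMk (hasDerivAt_const _ _))
  exact ((hf.differentiable (by simp) P).hasFDerivAt.comp_hasDerivAt P.2.1 hc).deriv

lemma py_pd {f} (hf : ContDiff ℝ (⊤ : ℕ∞) f) : py f = pd e2 f := by
  funext P
  have hc : HasDerivAt (fun w : ℝ => ((P.1, P.2.1, w, P.2.2.2) : ℝ×ℝ×ℝ×ℝ)) e2 P.2.2.1 :=
    (hasDerivAt_const _ _).prodMk ((hasDerivAt_const _ _).prodMk
      ((hasDerivAt_id _).prodMk (hasDerivAt_const _ _)))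
  exact ((hf.differentiable (by simp) P).hasFDerivAt.comp_hasDerivAt P.2.2.1 hc).deriv

lemma pz_pd {f} (hf : ContDiff ℝ (⊤ : ℕ∞) f) : pz f = pd e3 f := by
  funext P
  have hc : HasDerivAt (fun w : ℝ => ((P.1, P.2.1, P.2.2.1, w) : ℝ×ℝ×ℝ×ℝ)) e3 P.2.2.2 :=
    (hasDerivAt_const _ _).prodMk ((hasDerivAt_const _ _).prodMk
      ((hasDerivAt_const _ _).prodMk (hasDerivAt_id _)))
  exact ((hf.differentiable (by simp) P).hasFDerivAt.comp_hasDerivAt P.2.2.2 hc).deriv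

@[fun_prop]
lemma pt_smooth {f} (hf : ContDiff ℝ (⊤ : ℕ∞) f) : ContDiff ℝ (⊤ : ℕ∞) (pt f) := by
  rw [pt_pd hf]; fun_prop
@[fun_prop]
lemma px_smooth {f} (hf : ContDiff ℝ (⊤ : ℕ∞) f) : ContDiff ℝ (⊤ : ℕ∞) (px f) := by
  rw [px_pd hf]; fun_prop
@[fun_prop]
lemma py_smooth {f} (hf : ContDiff ℝ (⊤ : ℕ∞) f) : ContDiff ℝ (⊤ : ℕ∞) (py f) := by
  rw [py_pd hf]; fun_prop
@[fun_prop]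
lemma pz_smooth {f} (hf : ContDiff ℝ (⊤ : ℕ∞) f) : ContDiff ℝ (⊤ : ℕ∞) (pz f) := by
  rw [pz_pd hf]; fun_prop

lemma pd_add (w : ℝ×ℝ×ℝ×ℝ) {f g} (hf : ContDiff ℝ (⊤ : ℕ∞) f) (hg : ContDiff ℝ (⊤ : ℕ∞) g) :
    pd w (fun P => f P + g P) = fun P => pd w f P + pd w g P := by
  funext P
  simp only [pd]
  rw [fderiv_fun_add (hf.differentiable (by simp) P) (hg.differentiable (by simp) P)]
  rfl

lemma pd_sub (w : ℝ×ℝ×ℝ×ℝ) {f g} (hf : ContDiff ℝ (⊤ : ℕ∞) f) (hg : ContDiff ℝ (⊤ : ℕ∞) g) :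
    pd w (fun P => f P - g P) = fun P => pd w f P - pd w g P := by
  funext P
  simp only [pd]
  rw [fderiv_fun_sub (hf.differentiable (by simp) P) (hg.differentiable (by simp) P)]
  rfl

lemma pd_mul (w : ℝ×ℝ×ℝ×ℝ) {f g} (hf : ContDiff ℝ (⊤ : ℕ∞) f) (hg : ContDiff ℝ (⊤ : ℕ∞) g) :
    pd w (fun P => f P * g P) = fun P => f P * pd w g P + g P * pd w f P := by
  funext P
  simp only [pd]
  rw [fderiv_fun_mul (hf.differentiable (by simp) P) (hg.differentiable (by simp) P)]
  simp [smul_eq_mul]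

lemma pd_neg (w : ℝ×ℝ×ℝ×ℝ) {f} :
    pd w (fun P => -f P) = fun P => -pd w f P := by
  funext P
  simp only [pd, fderiv_fun_neg]
  rfl

lemma pd_const (w : ℝ×ℝ×ℝ×ℝ) (c : ℝ) : pd w (fun _ => c) = fun _ => 0 := by
  funext P
  simp [pd]

lemma pd_comm (w w' : ℝ×ℝ×ℝ×ℝ) {f} (hf : ContDiff ℝ (⊤ : ℕ∞) f) :
    pd w (pd w' f) = pd w' (pd w f) := by
  funext P
  have hdf : Differentiable ℝ (fderiv ℝ f) := (hf.fderiv_right (m := (⊤ : ℕ∞)) (by simp)).differentiable (by simp)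
  have h1 : ∀ (a b : ℝ×ℝ×ℝ×ℝ), fderiv ℝ (fun Q => fderiv ℝ f Q b) P a
      = fderiv ℝ (fderiv ℝ f) P a b := by
    intro a b
    rw [fderiv_clm_apply (hdf P) (differentiableAt_const b)]
    simp
  have hsymm := second_derivative_symmetric (f' := fderiv ℝ f)
      (f'' := fderiv ℝ (fderiv ℝ f) P)
      (fun y => (hf.differentiable (by simp) y).hasFDerivAt) (hdf P).hasFDerivAt w w'
  show fderiv ℝ (fun Q => fderiv ℝ f Q w') P w = fderiv ℝ (fun Q => fderiv ℝ f Q w) P w'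
  rw [h1, h1, hsymm]

/-- `(t,x,y,z) ↦ A (t,z)` as a function on `ℝ⁴`. -/
def Bof (A : ℝ × ℝ → ℝ) : ℝ × ℝ × ℝ × ℝ → ℝ := fun P => A (P.1, P.2.2.2)

@[fun_prop]
lemma Bof_smooth {A : ℝ × ℝ → ℝ} (hA : ContDiff ℝ (⊤ : ℕ∞) A) : ContDiff ℝ (⊤ : ℕ∞) (Bof A) := by
  unfold Bof; fun_prop

lemma J_def' : ∀ f g, J f g = fun P => px f P * py g P - py f P * px g P := fun _ _ => rfl
lemma lap_def' : ∀ f, lap f = fun P => px (px f) P + py (py f) P := fun _ => rfl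
lemma F1_def' : ∀ u v, F1 u v = fun P => pt (lap u) P - pz (lap v) P - J u (lap u) P + J v (lap v) P :=
  fun _ _ => rfl
lemma F2_def' : ∀ u v, F2 u v = fun P => pt v P - pz u P - J u v P := fun _ _ => rfl

set_option maxHeartbeats 10000000 in
theorem Phi1_symmetry_of_rmhd
    (u v : ℝ × ℝ × ℝ × ℝ → ℝ) (A : ℝ × ℝ → ℝ)
    (hu : ContDiff ℝ (⊤ : ℕ∞) u) (hv : ContDiff ℝ (⊤ : ℕ∞) v) (hA : ContDiff ℝ (⊤ : ℕ∞) A)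
    (hF1 : ∀ P, F1 u v P = 0) (hF2 : ∀ P, F2 u v P = 0)
    (hwave : ∀ Q, dt2 (dt2 A) Q = dz2 (dz2 A) Q)
    (f1 f2 : ℝ × ℝ × ℝ × ℝ → ℝ)
    (hf1 : f1 = fun P => -(dz2 A (P.1, P.2.2.2)) * pt u P - dt2 A (P.1, P.2.2.2) * pz u P
      - dt2 (dz2 A) (P.1, P.2.2.2) * u P - dt2 (dt2 A) (P.1, P.2.2.2) * v P)
    (hf2 : f2 = fun P => -(dz2 A (P.1, P.2.2.2)) * pt v P - dt2 A (P.1, P.2.2.2) * pz v P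
      - dt2 (dt2 A) (P.1, P.2.2.2) * u P - dt2 (dz2 A) (P.1, P.2.2.2) * v P) :
    (∀ P, pt (lap f1) P - pz (lap f2) P - J f1 (lap u) P - J u (lap f1) P
      + J f2 (lap v) P + J v (lap f2) P = 0) ∧
    (∀ P, pt f2 P - pz f1 P - J f1 v P - J u f2 P = 0) := by
  have hB : ContDiff ℝ (⊤ : ℕ∞) (Bof A) := Bof_smooth hA
  have hXB : pd e1 (Bof A) = fun _ => 0 := by
    rw [← px_pd hB]; funext P; unfold px Bof; simp
  have hYB : pd e2 (Bof A) = fun _ => 0 := by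
    rw [← py_pd hB]; funext P; unfold py Bof; simp
  have hW : pd e3 (pd e3 (Bof A)) = pd e0 (pd e0 (Bof A)) := by
    rw [← pz_pd hB, ← pz_pd (pz_smooth hB), ← pt_pd hB, ← pt_pd (pt_smooth hB)]
    funext P
    exact (hwave (P.1, P.2.2.2)).symm
  have b1 : ∀ P : ℝ×ℝ×ℝ×ℝ, dz2 A (P.1, P.2.2.2) = pd e3 (Bof A) P :=
    fun P => congrFun (pz_pd hB) P
  have b2 : ∀ P : ℝ×ℝ×ℝ×ℝ, dt2 A (P.1, P.2.2.2) = pd e0 (Bof A) P :=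
    fun P => congrFun (pt_pd hB) P
  have b3 : ∀ P : ℝ×ℝ×ℝ×ℝ, dt2 (dz2 A) (P.1, P.2.2.2) = pd e0 (pd e3 (Bof A)) P := by
    intro P
    have h : dt2 (dz2 A) (P.1, P.2.2.2) = pt (pz (Bof A)) P := rfl
    rw [h, pz_pd hB, pt_pd (pd_smooth _ hB)]
  have b4 : ∀ P : ℝ×ℝ×ℝ×ℝ, dt2 (dt2 A) (P.1, P.2.2.2) = pd e0 (pd e0 (Bof A)) P := by
    intro P
    have h : dt2 (dt2 A) (P.1, P.2.2.2) = pt (pt (Bof A)) P := rfl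
    rw [h, pt_pd hB, pt_pd (pd_smooth _ hB)]
  have hf1' : f1 = fun P => -(pd e3 (Bof A) P) * pd e0 u P + -(pd e0 (Bof A) P) * pd e3 u P
      + -(pd e0 (pd e3 (Bof A)) P) * u P + -(pd e0 (pd e0 (Bof A)) P) * v P := by
    rw [hf1]; funext P
    rw [b1 P, b2 P, b3 P, b4 P, congrFun (pt_pd hu) P, congrFun (pz_pd hu) P]
    ring
  have hf2' : f2 = fun P => -(pd e3 (Bof A) P) * pd e0 v P + -(pd e0 (Bof A) P) * pd e3 v P
      + -(pd e0 (pd e0 (Bof A)) P) * u P + -(pd e0 (pd e3 (Bof A)) P) * v P := by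
    rw [hf2]; funext P
    rw [b1 P, b2 P, b3 P, b4 P, congrFun (pt_pd hv) P, congrFun (pz_pd hv) P]
    ring
  have hf1s : ContDiff ℝ (⊤ : ℕ∞) f1 := by rw [hf1']; fun_prop
  have hf2s : ContDiff ℝ (⊤ : ℕ∞) f2 := by rw [hf2']; fun_prop
  have hF1fun : F1 u v = fun _ => (0:ℝ) := funext hF1
  have hF2fun : F2 u v = fun _ => (0:ℝ) := funext hF2
  constructor
  · intro P
    have h0 := hF1 P
    have hT : pd e0 (F1 u v) P = 0 := by rw [hF1fun, pd_const]
    have hZ : pd e3 (F1 u v) P = 0 := by rw [hF1fun, pd_const]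
    simp (disch := fun_prop) only [F1_def', J_def', lap_def', pt_pd, px_pd, py_pd, pz_pd,
      hf1', hf2', pd_add, pd_sub, pd_mul, pd_neg, pd_const, hXB, hYB, hW,
      pd_comm e3 e0, pd_comm e1 e0, pd_comm e2 e0, pd_comm e1 e3, pd_comm e2 e3, pd_comm e2 e1,
      mul_zero, zero_mul, add_zero, zero_add, neg_zero, mul_neg, neg_mul] at h0 hT hZ ⊢
    linear_combination (-(pd e3 (Bof A) P)) * hT + (-(pd e0 (Bof A) P)) * hZ
      + (2 * -(pd e0 (pd e3 (Bof A)) P)) * h0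
  · intro P
    have h0 := hF2 P
    have hT : pd e0 (F2 u v) P = 0 := by rw [hF2fun, pd_const]
    have hZ : pd e3 (F2 u v) P = 0 := by rw [hF2fun, pd_const]
    simp (disch := fun_prop) only [F2_def', J_def', lap_def', pt_pd, px_pd, py_pd, pz_pd,
      hf1', hf2', pd_add, pd_sub, pd_mul, pd_neg, pd_const, hXB, hYB, hW,
      pd_comm e3 e0, pd_comm e1 e0, pd_comm e2 e0, pd_comm e1 e3, pd_comm e2 e3, pd_comm e2 e1,
      mul_zero, zero_mul, add_zero, zero_add, neg_zero, mul_neg, neg_mul] at h0 hT hZ ⊢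
    linear_combination (-(pd e3 (Bof A) P)) * hT + (-(pd e0 (Bof A) P)) * hZ
      + (2 * -(pd e0 (pd e3 (Bof A)) P)) * h0
end
end
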